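/- Let l, r, b, a be nonnegative integers with 0 ≤ r < l and 0 ≤ b < a, and let R = ({−l, ..., r} × {−b, ..., a}) \ {(0,0)} ⊆ ℤ². Then for every q ≥ 2, the supremum of R_q(X) over all R-recoverable systems X on ℤ² over alphabets of size q equals 1 − 1/((r+1)(b+1)). -/

import Mathlib

/-- An `R`-recoverable system on `ℤ²`: every symbol `x_v` is a function of the
symbols in positions `v + R`. -/
def IsRecoverable2 {Q : Type*} (R : Set (ℤ × ℤ)) (X : Set (ℤ × ℤ → Q)) : Prop :=
  ∀ v : ℤ × ℤ, ∃ f : (ℤ × ℤ → Q) → Q,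
    (∀ x y : ℤ × ℤ → Q, (∀ u ∈ R, x (v + u) = y (v + u)) → f x = f y) ∧
    ∀ x ∈ X, f x = x v

/-- `|B_{[n]²}(X)|`: restrictions of elements of `X` to `{0,…,n−1}²`. -/
noncomputable def blockCount2 {Q : Type*} (X : Set (ℤ × ℤ → Q)) (n : ℕ) : ℕ :=
  Nat.card ↥((fun x : ℤ × ℤ → Q =>
    fun p : Fin n × Fin n => x (((p.1 : ℕ) : ℤ), ((p.2 : ℕ) : ℤ))) '' X)

/-- The rate `R_q(X) = limsup_{n→∞} (1/n²) log_q |B_{[n]²}(X)|`. -/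
noncomputable def rate2 (q : ℕ) {Q : Type*} (X : Set (ℤ × ℤ → Q)) : ℝ :=
  Filter.limsup (fun n : ℕ => Real.logb q (blockCount2 X n) / ((n : ℝ) ^ 2)) Filter.atTop

/-!
Tile `ℤ²` by the rectangles `w + [0,r] × [0,b]` with `w` in the lattice `(r+1)ℤ × (b+1)ℤ`.

Upper bound: if two configurations of an `R`-recoverable system agree on an `n × n` box off
the lattice points `w` with `w + R` inside the box, they agree on those points too, by
induction on `w.1 - w.2`: a lattice difference `u ∈ R` has `u.1 ≤ 0 ≤ u.2`, so recovering
`x_w` only uses lattice symbols of smaller rank. Hence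
`log_q |B_n(X)| ≤ n² - #(such w) ~ (1 - 1/((r+1)(b+1))) n²`.

Lower bound: over `ZMod q`, the system in which every tile sums to zero attains this. It is
`R`-recoverable because each symbol is minus the sum of the rest of its tile, which lies in
`v + R` as `r ≤ l` and `b ≤ a`; and its symbols off the lattice can be chosen freely.
-/

open Finset Filter Topology

section Restriction

variable {ι Q : Type*} [Fintype Q]

theorem card_le_pow_of_restrict_injective (Y : Set (ι → Q)) (S : Finset ι)
    (h : ∀ y ∈ Y, ∀ y' ∈ Y, (∀ i ∈ S, y i = y' i) → y = y') :
    Nat.card Y ≤ Fintype.card Q ^ #S := by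
  have hinj : Function.Injective fun (y : Y) (i : S) => y.1 i := fun y y' hyy' =>
    Subtype.ext <| h y y.2 y' y'.2 fun i hi => congrFun hyy' ⟨i, hi⟩
  simpa [Nat.card_fun] using Nat.card_le_card_of_injective _ hinj

theorem pow_le_card_of_restrict_surjective [Finite ι] [Nonempty Q] (Y : Set (ι → Q))
    (S : Finset ι) (h : ∀ g : ι → Q, ∃ y ∈ Y, ∀ i ∈ S, y i = g i) :
    Fintype.card Q ^ #S ≤ Nat.card Y := by
  have hsurj : Function.Surjective fun (y : Y) (i : S) => y.1 i := by
    intro g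
    obtain ⟨y, hy, hyg⟩ := h (Function.extend Subtype.val g fun _ => Classical.arbitrary Q)
    exact ⟨⟨y, hy⟩, funext fun i => (hyg i i.2).trans (Subtype.val_injective.extend_apply _ _ i)⟩
  simpa [Nat.card_fun] using Nat.card_le_card_of_surjective _ hsurj

end Restriction

def boxPt (n : ℕ) (p : Fin n × Fin n) : ℤ × ℤ := (((p.1 : ℕ) : ℤ), ((p.2 : ℕ) : ℤ))

theorem boxPt_injective (n : ℕ) : Function.Injective (boxPt n) := by
  rintro ⟨i, j⟩ ⟨i', j'⟩ h
  simp only [boxPt, Prod.mk.injEq, Nat.cast_inj, Fin.val_inj] at h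
  rw [h.1, h.2]

theorem mem_range_boxPt {n : ℕ} {v : ℤ × ℤ} :
    v ∈ Set.range (boxPt n) ↔ 0 ≤ v.1 ∧ v.1 < n ∧ 0 ≤ v.2 ∧ v.2 < n := by
  constructor
  · rintro ⟨⟨i, j⟩, rfl⟩
    simp [boxPt]
  · rintro ⟨h1, h2, h3, h4⟩
    exact ⟨(⟨v.1.toNat, by omega⟩, ⟨v.2.toNat, by omega⟩), Prod.ext (by simp [boxPt, h1])
      (by simp [boxPt, h3])⟩

theorem blockCount2_eq_card_image {Q : Type*} (X : Set (ℤ × ℤ → Q)) (n : ℕ) :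
    blockCount2 X n = Nat.card ((· ∘ boxPt n) '' X) := rfl

noncomputable def boxSites (n : ℕ) (K : Finset (ℤ × ℤ)) : Finset (Fin n × Fin n) :=
  K.preimage (boxPt n) (boxPt_injective n).injOn

theorem card_boxSites_compl {n : ℕ} {K : Finset (ℤ × ℤ)} (hK : ↑K ⊆ Set.range (boxPt n)) :
    #(boxSites n K)ᶜ = n * n - #K := by
  classical
  rw [card_compl, boxSites, card_preimage, filter_true_of_mem fun v hv => hK hv]
  simp

section BlockCount

variable {Q : Type*} [Fintype Q] {X : Set (ℤ × ℤ → Q)} {n : ℕ} {K : Finset (ℤ × ℤ)}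

theorem blockCount2_le_of_eqOn (hK : ↑K ⊆ Set.range (boxPt n))
    (hdet : ∀ x ∈ X, ∀ y ∈ X, Set.EqOn x y (Set.range (boxPt n) \ K) →
      Set.EqOn x y (Set.range (boxPt n))) :
    blockCount2 X n ≤ Fintype.card Q ^ (n * n - #K) := by
  rw [← card_boxSites_compl hK, blockCount2_eq_card_image]
  refine card_le_pow_of_restrict_injective _ _ ?_
  rintro _ ⟨x, hx, rfl⟩ _ ⟨y, hy, rfl⟩ hxy
  funext p
  refine hdet x hx y hy ?_ ⟨p, rfl⟩
  rintro _ ⟨⟨p, rfl⟩, hpK⟩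
  exact hxy p (by simpa [boxSites] using hpK)

theorem pow_le_blockCount2_of_eqOn [Nonempty Q] (hK : ↑K ⊆ Set.range (boxPt n))
    (hfree : ∀ z : ℤ × ℤ → Q, ∃ x ∈ X, Set.EqOn x z (Set.range (boxPt n) \ K)) :
    Fintype.card Q ^ (n * n - #K) ≤ blockCount2 X n := by
  rw [← card_boxSites_compl hK, blockCount2_eq_card_image]
  refine pow_le_card_of_restrict_surjective _ _ fun g => ?_
  obtain ⟨x, hx, hxz⟩ := hfree (Function.extend (boxPt n) g fun _ => Classical.arbitrary Q)
  refine ⟨_, ⟨x, hx, rfl⟩, fun p hp => ?_⟩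
  change x (boxPt n p) = g p
  rw [hxz ⟨⟨p, rfl⟩, by simpa [boxSites] using hp⟩, (boxPt_injective n).extend_apply]

end BlockCount

theorem abs_card_filter_dvd_Ico_sub_le {d a b : ℤ} (hd : 0 < d) (hab : a ≤ b) :
    |(#{z ∈ Ico a b | d ∣ z} : ℚ) - (b - a) / d| ≤ 1 := by
  have hdq : (0 : ℚ) < d := by exact_mod_cast hd
  have hceil : ⌈(a : ℚ) / d⌉ ≤ ⌈(b : ℚ) / d⌉ :=
    Int.ceil_mono (div_le_div_of_nonneg_right (by exact_mod_cast hab) hdq.le)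
  have hcard : (#{z ∈ Ico a b | d ∣ z} : ℚ) = ⌈(b : ℚ) / d⌉ - ⌈(a : ℚ) / d⌉ := by
    rw [← Int.cast_natCast, Int.Ico_filter_dvd_card a b hd, max_eq_left (by omega)]
    push_cast; rfl
  rw [hcard, abs_le, sub_div]
  constructor <;> linarith [Int.le_ceil ((b : ℚ) / d), Int.ceil_lt_add_one ((b : ℚ) / d),
    Int.le_ceil ((a : ℚ) / d), Int.ceil_lt_add_one ((a : ℚ) / d)]

theorem tendsto_card_filter_dvd_Ico_div {d : ℤ} (hd : 0 < d) (a c : ℤ) :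
    Tendsto (fun n : ℕ => (#{z ∈ Ico a (n - c) | d ∣ z} : ℝ) / n) atTop (𝓝 (1 / d)) := by
  have hdR : (0 : ℝ) < d := by exact_mod_cast hd
  rw [← tendsto_sub_nhds_zero_iff]
  refine squeeze_zero_norm' ?_ (tendsto_const_div_atTop_nhds_zero_nat (1 + |(a + c : ℝ)| / d))
  filter_upwards [eventually_ge_atTop (a + c).toNat, eventually_gt_atTop 0] with n han hn
  have hnR : (0 : ℝ) < n := by exact_mod_cast hn
  set N : ℝ := ((#{z ∈ Ico a (n - c) | d ∣ z} : ℕ) : ℝ)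
  have hbound : |N - ((n : ℝ) - c - a) / d| ≤ 1 := by
    have h := (Rat.cast_le (K := ℝ)).mpr
      (abs_card_filter_dvd_Ico_sub_le (a := a) (b := n - c) hd (by omega))
    push_cast at h
    exact h
  have hkey : |N - n / d| ≤ 1 + |(a + c : ℝ)| / d := by
    calc |N - n / d| ≤ |N - ((n : ℝ) - c - a) / d| + |((n : ℝ) - c - a) / d - n / d| :=
          abs_sub_le _ _ _
      _ ≤ 1 + |(a + c : ℝ)| / d := by
          gcongr
          rw [← sub_div, abs_div, abs_of_pos hdR, show (n : ℝ) - c - a - n = -(a + c) by ring,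
            abs_neg]
  rw [Real.norm_eq_abs, show N / n - 1 / d = (N - n / d) / n by field_simp, abs_div,
    abs_of_pos hnR]
  exact div_le_div_of_nonneg_right hkey hnR.le

theorem tendsto_sub_mul_div_sq {c₁ c₂ : ℕ → ℕ} {α β : ℝ}
    (h₁ : Tendsto (fun n => (c₁ n : ℝ) / n) atTop (𝓝 α))
    (h₂ : Tendsto (fun n => (c₂ n : ℝ) / n) atTop (𝓝 β)) (hle : ∀ n, c₁ n * c₂ n ≤ n * n) :
    Tendsto (fun n => ((n * n - c₁ n * c₂ n : ℕ) : ℝ) / n ^ 2) atTop (𝓝 (1 - α * β)) := by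
  refine ((h₁.mul h₂).const_sub 1).congr' ?_
  filter_upwards [eventually_gt_atTop 0] with n hn
  rw [Nat.cast_sub (hle n)]
  push_cast
  field_simp

section Rate

variable {q N k : ℕ}

theorem logb_natCast_le_of_le_pow (hq : 1 < q) (h : N ≤ q ^ k) : Real.logb q N ≤ k := by
  rcases N.eq_zero_or_pos with rfl | hN
  · simp
  rw [Real.logb_le_iff_le_rpow (by exact_mod_cast hq) (by exact_mod_cast hN), Real.rpow_natCast]
  exact_mod_cast h

theorem le_logb_natCast_of_pow_le (hq : 1 < q) (h : q ^ k ≤ N) : (k : ℝ) ≤ Real.logb q N := by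
  have hN : 0 < N := lt_of_lt_of_le (Nat.pow_pos (by omega)) h
  rw [Real.le_logb_iff_rpow_le (by exact_mod_cast hq) (by exact_mod_cast hN), Real.rpow_natCast]
  exact_mod_cast h

variable {Q : Type*} {X : Set (ℤ × ℤ → Q)} {L : ℝ} {e e' : ℕ → ℕ}

theorem rate2_le_of_blockCount2_le (hq : 1 < q)
    (he : Tendsto (fun n => (e n : ℝ) / n ^ 2) atTop (𝓝 L))
    (h : ∀ n, blockCount2 X n ≤ q ^ e n) : rate2 q X ≤ L := by
  have hnonneg (n : ℕ) : 0 ≤ Real.logb q (blockCount2 X n) / (n : ℝ) ^ 2 :=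
    div_nonneg (div_nonneg (Real.log_natCast_nonneg _) (Real.log_natCast_nonneg _)) (by positivity)
  refine (limsup_le_limsup (Eventually.of_forall fun n => ?_)
    (isCoboundedUnder_le_of_le atTop hnonneg) he.isBoundedUnder_le).trans he.limsup_eq.le
  exact div_le_div_of_nonneg_right (logb_natCast_le_of_le_pow hq (h n)) (by positivity)

theorem rate2_eq_of_pow_le_blockCount2_le_pow (hq : 1 < q)
    (he' : Tendsto (fun n => (e' n : ℝ) / n ^ 2) atTop (𝓝 L))
    (he : Tendsto (fun n => (e n : ℝ) / n ^ 2) atTop (𝓝 L))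
    (hlo : ∀ n, q ^ e' n ≤ blockCount2 X n) (hhi : ∀ n, blockCount2 X n ≤ q ^ e n) :
    rate2 q X = L :=
  (tendsto_of_tendsto_of_tendsto_of_le_of_le he' he
    (fun n => div_le_div_of_nonneg_right (le_logb_natCast_of_pow_le hq (hlo n)) (by positivity))
    (fun n => div_le_div_of_nonneg_right (logb_natCast_le_of_le_pow hq (hhi n))
      (by positivity))).limsup_eq

end Rate

theorem IsRecoverable2.eqOn_of_eqOn_diff {Q : Type*} {R : Set (ℤ × ℤ)} {X : Set (ℤ × ℤ → Q)}
    (hX : IsRecoverable2 R X) {B D : Set (ℤ × ℤ)} (rank : ℤ × ℤ → ℕ)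
    (hB : ∀ v ∈ D, ∀ u ∈ R, v + u ∈ B)
    (hrank : ∀ v ∈ D, ∀ u ∈ R, v + u ∈ D → rank (v + u) < rank v)
    {x y : ℤ × ℤ → Q} (hx : x ∈ X) (hy : y ∈ X) (hxy : Set.EqOn x y (B \ D)) :
    Set.EqOn x y D := by
  intro v hv
  induction hk : rank v using Nat.strong_induction_on generalizing v with
  | _ k ih =>
    obtain ⟨f, hf, hfX⟩ := hX v
    rw [← hfX x hx, ← hfX y hy]
    refine hf x y fun u hu => ?_
    by_cases hvu : v + u ∈ D
    · exact ih _ (hk ▸ hrank v hv u hu hvu) hvu rfl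
    · exact hxy ⟨hB v hv u hu, hvu⟩

def rectNbhd (l r b a : ℕ) : Set (ℤ × ℤ) :=
  {v | v ≠ 0 ∧ -(l : ℤ) ≤ v.1 ∧ v.1 ≤ (r : ℤ) ∧ -(b : ℤ) ≤ v.2 ∧ v.2 ≤ (a : ℤ)}

def tileLattice (r b : ℕ) : Set (ℤ × ℤ) := {v | (r + 1 : ℤ) ∣ v.1 ∧ (b + 1 : ℤ) ∣ v.2}

theorem nonpos_of_dvd_of_le {d z : ℤ} (hz : z ≤ d) (hd : d + 1 ∣ z) : z ≤ 0 := by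
  by_contra! h
  have := Int.eq_zero_of_dvd_of_nonneg_of_lt h.le (by omega) hd
  omega

section Lattice

variable {l r b a : ℕ} {v w u : ℤ × ℤ}

theorem lt_of_mem_rectNbhd_of_add_mem_tileLattice (hv : v ∈ tileLattice r b)
    (hvu : v + u ∈ tileLattice r b) (hu : u ∈ rectNbhd l r b a) : u.1 < u.2 := by
  obtain ⟨hu0, -, hu₁, hu₂, -⟩ := hu
  have h₁ : u.1 ≤ 0 := nonpos_of_dvd_of_le hu₁ ((dvd_add_right hv.1).1 hvu.1)
  have h₂ : -u.2 ≤ 0 := nonpos_of_dvd_of_le (by omega) ((dvd_add_right hv.2).1 hvu.2).neg_right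
  by_contra! h
  exact hu0 (Prod.ext (show u.1 = 0 by omega) (show u.2 = 0 by omega))

end Lattice

noncomputable def latticeSites (r b : ℕ) (s t : Finset ℤ) : Finset (ℤ × ℤ) :=
  {z ∈ s | (r + 1 : ℤ) ∣ z} ×ˢ {z ∈ t | (b + 1 : ℤ) ∣ z}

theorem mem_latticeSites {r b : ℕ} {s t : Finset ℤ} {v : ℤ × ℤ} :
    v ∈ latticeSites r b s t ↔ (v.1 ∈ s ∧ v.2 ∈ t) ∧ v ∈ tileLattice r b := by
  simp only [latticeSites, mem_product, mem_filter]
  exact ⟨fun h => ⟨⟨h.1.1, h.2.1⟩, h.1.2, h.2.2⟩, fun h => ⟨⟨h.1.1, h.2.1⟩, h.1.2, h.2.2⟩⟩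

theorem tendsto_card_latticeSites_compl (r b a₁ c₁ a₂ c₂ : ℕ) :
    Tendsto (fun n : ℕ =>
        ((n * n - #(latticeSites r b (Ico (a₁ : ℤ) (n - c₁)) (Ico (a₂ : ℤ) (n - c₂))) : ℕ) : ℝ) /
          n ^ 2)
      atTop (𝓝 (1 - 1 / (((r : ℝ) + 1) * ((b : ℝ) + 1)))) := by
  have hcount (d a c n : ℕ) : #{z ∈ Ico (a : ℤ) (n - c) | (d + 1 : ℤ) ∣ z} ≤ n :=
    (card_filter_le _ _).trans (by rw [Int.card_Ico]; omega)
  have h₁ := tendsto_card_filter_dvd_Ico_div (d := r + 1) (by omega) a₁ c₁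
  have h₂ := tendsto_card_filter_dvd_Ico_div (d := b + 1) (by omega) a₂ c₂
  push_cast at h₁ h₂
  simpa only [latticeSites, card_product, one_div_mul_one_div] using
    tendsto_sub_mul_div_sq h₁ h₂ fun n => Nat.mul_le_mul (hcount r a₁ c₁ n) (hcount b a₂ c₂ n)

theorem blockCount2_le_of_isRecoverable2 {Q : Type*} [Fintype Q] {l r b a : ℕ}
    {X : Set (ℤ × ℤ → Q)} (hX : IsRecoverable2 (rectNbhd l r b a) X) (n : ℕ) :
    blockCount2 X n ≤
      Fintype.card Q ^
        (n * n - #(latticeSites r b (Ico (l : ℤ) (n - r)) (Ico (b : ℤ) (n - a)))) := by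
  set K := latticeSites r b (Ico (l : ℤ) (n - r)) (Ico (b : ℤ) (n - a))
  have hK : ↑K ⊆ Set.range (boxPt n) := fun v hv => by
    simp only [K, mem_coe, mem_latticeSites, mem_Ico] at hv
    exact mem_range_boxPt.2 (by omega)
  refine blockCount2_le_of_eqOn hK fun x hx y hy hxy v hv => ?_
  by_cases hvK : v ∈ K
  · refine hX.eqOn_of_eqOn_diff (fun v => (v.1 - v.2 + n).toNat) (fun v hv u hu => ?_)
      (fun v hv u hu hvu => ?_) hx hy hxy hvK
    · simp only [K, mem_coe, mem_latticeSites, mem_Ico] at hv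
      obtain ⟨-, hu⟩ := hu
      exact mem_range_boxPt.2 (by simp only [Prod.fst_add, Prod.snd_add]; omega)
    · simp only [K, mem_coe, mem_latticeSites, mem_Ico] at hv hvu
      have := lt_of_mem_rectNbhd_of_add_mem_tileLattice hv.2 hvu.2 hu
      simp only [Prod.fst_add, Prod.snd_add] at hvu ⊢
      omega
  · exact hxy ⟨hv, hvK⟩

theorem rate2_le_of_isRecoverable2 {Q : Type*} [Fintype Q] {l r b a : ℕ}
    {X : Set (ℤ × ℤ → Q)} (hQ : 1 < Fintype.card Q) (hX : IsRecoverable2 (rectNbhd l r b a) X) :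
    rate2 (Fintype.card Q) X ≤ 1 - 1 / (((r : ℝ) + 1) * ((b : ℝ) + 1)) :=
  rate2_le_of_blockCount2_le hQ (tendsto_card_latticeSites_compl r b l r b a)
    (blockCount2_le_of_isRecoverable2 hX)

noncomputable def tile (r b : ℕ) : Finset (ℤ × ℤ) := Icc 0 (r : ℤ) ×ˢ Icc 0 (b : ℤ)

def tileSumZero (G : Type*) [AddCommGroup G] (r b : ℕ) : Set (ℤ × ℤ → G) :=
  {x | ∀ w ∈ tileLattice r b, ∑ u ∈ tile r b, x (w + u) = 0}

section Tiles

variable {r b : ℕ} {w u : ℤ × ℤ}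

theorem eq_zero_of_mem_tile_of_add_mem_tileLattice (hw : w ∈ tileLattice r b)
    (hu : u ∈ tile r b) (hwu : w + u ∈ tileLattice r b) : u = 0 := by
  simp only [tile, mem_product, mem_Icc] at hu
  exact Prod.ext
    (Int.eq_zero_of_dvd_of_nonneg_of_lt hu.1.1 (by omega) ((dvd_add_right hw.1).1 hwu.1))
    (Int.eq_zero_of_dvd_of_nonneg_of_lt hu.2.1 (by omega) ((dvd_add_right hw.2).1 hwu.2))

theorem exists_mem_tileLattice_sub_mem_tile (r b : ℕ) (v : ℤ × ℤ) :
    ∃ w ∈ tileLattice r b, v - w ∈ tile r b := by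
  refine ⟨((r + 1) * (v.1 / (r + 1)), (b + 1) * (v.2 / (b + 1))),
    ⟨dvd_mul_right _ _, dvd_mul_right _ _⟩, ?_⟩
  simp only [tile, mem_product, mem_Icc, Prod.fst_sub, Prod.snd_sub, ← Int.emod_def]
  have := Int.emod_lt_of_pos v.1 (show (0 : ℤ) < r + 1 by omega)
  have := Int.emod_lt_of_pos v.2 (show (0 : ℤ) < b + 1 by omega)
  exact ⟨⟨Int.emod_nonneg _ (by omega), by omega⟩, Int.emod_nonneg _ (by omega), by omega⟩

end Tiles

section TileSumZero

variable {G : Type*} [AddCommGroup G] {r b : ℕ}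

theorem isRecoverable2_tileSumZero {l a : ℕ} (hrl : r ≤ l) (hba : b ≤ a) :
    IsRecoverable2 (rectNbhd l r b a) (tileSumZero G r b) := by
  intro v
  obtain ⟨w, hw, ho⟩ := exists_mem_tileLattice_sub_mem_tile r b v
  refine ⟨fun x => -∑ u ∈ (tile r b).erase (v - w), x (w + u), fun x y hxy => ?_, fun x hx => ?_⟩
  · refine congrArg Neg.neg (sum_congr rfl fun u hu => ?_)
    obtain ⟨hne, hu⟩ := mem_erase.1 hu
    have hmem : u - (v - w) ∈ rectNbhd l r b a := by
      refine ⟨sub_ne_zero.2 hne, ?_⟩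
      simp only [tile, mem_product, mem_Icc, Prod.fst_sub, Prod.snd_sub] at hu ho ⊢
      omega
    rw [show w + u = v + (u - (v - w)) by abel]
    exact hxy _ hmem
  · have hsum := hx w hw
    rw [← add_sum_erase _ _ ho, add_sub_cancel] at hsum
    exact neg_eq_of_add_eq_zero_left hsum

theorem exists_mem_tileSumZero_eqOn (z : ℤ × ℤ → G) :
    ∃ x ∈ tileSumZero G r b, Set.EqOn x z (tileLattice r b)ᶜ := by
  classical
  refine ⟨fun v => if v ∈ tileLattice r b then -∑ u ∈ (tile r b).erase 0, z (v + u) else z v,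
    fun w hw => ?_, fun v hv => if_neg hv⟩
  have h0 : (0 : ℤ × ℤ) ∈ tile r b := by simp [tile]
  rw [← add_sum_erase _ _ h0, add_zero]
  dsimp only
  rw [if_pos hw, neg_add_eq_zero]
  refine sum_congr rfl fun u hu => (if_neg fun hwu => ?_).symm
  exact (mem_erase.1 hu).1 (eq_zero_of_mem_tile_of_add_mem_tileLattice hw (mem_erase.1 hu).2 hwu)

theorem pow_le_blockCount2_tileSumZero [Fintype G] (n : ℕ) :
    Fintype.card G ^ (n * n - #(latticeSites r b (Ico 0 (n : ℤ)) (Ico 0 (n : ℤ)))) ≤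
      blockCount2 (tileSumZero G r b) n := by
  have hK : ↑(latticeSites r b (Ico 0 (n : ℤ)) (Ico 0 (n : ℤ))) ⊆ Set.range (boxPt n) :=
    fun v hv => by
      simp only [mem_coe, mem_latticeSites, mem_Ico] at hv
      exact mem_range_boxPt.2 (by omega)
  refine pow_le_blockCount2_of_eqOn hK fun z => ?_
  obtain ⟨x, hx, hxz⟩ := exists_mem_tileSumZero_eqOn (r := r) (b := b) z
  refine ⟨x, hx, fun v hv => hxz fun hvL => hv.2 ?_⟩
  have := mem_range_boxPt.1 hv.1
  simp only [mem_coe, mem_latticeSites, mem_Ico]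
  exact ⟨by omega, hvL⟩

theorem rate2_tileSumZero [Fintype G] (hG : 1 < Fintype.card G) :
    rate2 (Fintype.card G) (tileSumZero G r b) = 1 - 1 / (((r : ℝ) + 1) * ((b : ℝ) + 1)) :=
  rate2_eq_of_pow_le_blockCount2_le_pow hG
    (by simpa using tendsto_card_latticeSites_compl r b 0 0 0 0)
    (tendsto_card_latticeSites_compl r b r r b b) pow_le_blockCount2_tileSumZero
    (blockCount2_le_of_isRecoverable2 (isRecoverable2_tileSumZero le_rfl le_rfl))

end TileSumZero

/-- For the rectangular recovery set `R = ([−l,r] × [−b,a]) \ {0}` with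
`0 ≤ r < l` and `0 ≤ b < a`, the supremum of rates of recoverable systems on
`ℤ²` over alphabets of size `q` is `1 − 1/((r+1)(b+1))`. -/
theorem stmt15 (l r b a : ℕ) (hrl : r < l) (hba : b < a) (q : ℕ) (hq : 2 ≤ q) :
    sSup {x : ℝ | ∃ (Q : Type) (_ : Fintype Q), Fintype.card Q = q ∧
        ∃ X : Set (ℤ × ℤ → Q),
          IsRecoverable2 {v : ℤ × ℤ | v ≠ 0 ∧
            -(l : ℤ) ≤ v.1 ∧ v.1 ≤ (r : ℤ) ∧ -(b : ℤ) ≤ v.2 ∧ v.2 ≤ (a : ℤ)} X ∧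
          rate2 q X = x} =
      1 - 1 / (((r : ℝ) + 1) * ((b : ℝ) + 1)) := by
  have : NeZero q := ⟨by omega⟩
  refine IsGreatest.csSup_eq ⟨⟨ZMod q, inferInstance, ZMod.card q, tileSumZero (ZMod q) r b,
    isRecoverable2_tileSumZero hrl.le hba.le, ?_⟩, ?_⟩
  · simpa only [ZMod.card] using rate2_tileSumZero (G := ZMod q) (r := r) (b := b)
      (by rw [ZMod.card]; omega)
  · rintro _ ⟨Q, _, rfl, X, hX, rfl⟩
    exact rate2_le_of_isRecoverable2 (by omega) hX
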